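/- arXiv:1907.08318 — 2 statements merged into one kernel-verified Lean document; each statement's English description precedes it below -/
import Mathlib

section
/- Let f : E₁ → ℝ ∪ {+∞} be proper and convex, let K ⊆ E₂ be a closed, convex cone, and let F : E₁ → E₂ be K-convex (with dom F = E₁). Assume the Slater-type condition F(ri(dom f)) ∩ ri(−K) ≠ ∅. Then inf {f(x) : x ∈ E₁, F(x) ∈ −K} = max_{v ∈ −K°} inf_{x ∈ E₁} (f(x) + ⟨v, F(x)⟩), where the maximum on the right-hand side is attained. -/
open scoped RealInnerProductSpace Pointwise
open Filter

noncomputable section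

/-- Convexity of an extended-real-valued function, defined via convexity of its epigraph. -/
def EConvexOn {E : Type*} [AddCommGroup E] [Module ℝ E] (f : E → EReal) : Prop :=
  Convex ℝ {p : E × ℝ | f p.1 ≤ (p.2 : EReal)}

/-- Closedness (lower semicontinuity) of an extended-real-valued function,
defined via closedness of its epigraph. -/
def EClosed {E : Type*} [TopologicalSpace E] (f : E → EReal) : Prop :=
  IsClosed {p : E × ℝ | f p.1 ≤ (p.2 : EReal)}

/-- Properness: the domain is nonempty and the function never takes the value `-∞`. -/
def EProper {E : Type*} (f : E → EReal) : Prop :=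
  (∃ x, f x < ⊤) ∧ ∀ x, f x ≠ ⊥

/-- The (effective) domain of an extended-real-valued function. -/
def edom {E : Type*} (f : E → EReal) : Set E := {x | f x < ⊤}

/-- The Fenchel conjugate. -/
def econj {E : Type*} [NormedAddCommGroup E] [InnerProductSpace ℝ E]
    (f : E → EReal) (y : E) : EReal :=
  ⨆ x, ((⟪y, x⟫ : ℝ) : EReal) - f x

/-- The convex subdifferential of `f` at `x₀`. -/
def esubdiff {E : Type*} [NormedAddCommGroup E] [InnerProductSpace ℝ E]
    (f : E → EReal) (x₀ : E) : Set E :=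
  {w | ∀ x, f x₀ + ((⟪w, x - x₀⟫ : ℝ) : EReal) ≤ f x}

/-- `K` is a cone: it is stable under multiplication by nonnegative scalars. -/
def IsCone {E : Type*} [SMul ℝ E] (K : Set E) : Prop :=
  ∀ ⦃t : ℝ⦄, 0 ≤ t → ∀ ⦃x⦄, x ∈ K → t • x ∈ K

/-- The polar cone `K° = {v : ⟪v,x⟫ ≤ 0 for all x ∈ K}`. -/
def polarCone {E : Type*} [NormedAddCommGroup E] [InnerProductSpace ℝ E] (K : Set E) : Set E :=
  {v | ∀ x ∈ K, ⟪v, x⟫ ≤ (0 : ℝ)}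

/-- The `K`-epigraph of a map `F` with domain `D`. -/
def epiK {E₁ E₂ : Type*} [AddCommGroup E₂] (K : Set E₂) (D : Set E₁) (F : E₁ → E₂) :
    Set (E₁ × E₂) :=
  {p | p.1 ∈ D ∧ p.2 - F p.1 ∈ K}

/-- The graph of a map `F` with domain `D`. -/
def gphF {E₁ E₂ : Type*} (D : Set E₁) (F : E₁ → E₂) : Set (E₁ × E₂) :=
  {p | p.1 ∈ D ∧ p.2 = F p.1}

open Classical in
/-- The scalarization `⟨v,F⟩` of the map `F` with domain `D`:
it equals `⟪v, F x⟫` on `D` and `+∞` elsewhere. -/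
def scal {E₁ E₂ : Type*} [NormedAddCommGroup E₂] [InnerProductSpace ℝ E₂]
    (v : E₂) (D : Set E₁) (F : E₁ → E₂) : E₁ → EReal :=
  fun x => if x ∈ D then ((⟪v, F x⟫ : ℝ) : EReal) else ⊤

open Classical in
/-- The composition `g ∘ F` for a map `F` with domain `D`:
it equals `g (F x)` on `D` and `+∞` elsewhere. -/
def compFn {E₁ E₂ : Type*} (g : E₂ → EReal) (D : Set E₁) (F : E₁ → E₂) : E₁ → EReal :=
  fun x => if x ∈ D then g (F x) else ⊤

open Classical in
/-- The indicator function of a set: `0` on `S` and `+∞` off `S`. -/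
def eindicator {E : Type*} (S : Set E) (x : E) : EReal := if x ∈ S then 0 else ⊤

/-- The support function of a set. -/
def suppFn {E : Type*} [NormedAddCommGroup E] [InnerProductSpace ℝ E] (S : Set E) (y : E) :
    EReal :=
  ⨆ x ∈ S, ((⟪x, y⟫ : ℝ) : EReal)

/-- The support function of a subset of a product of two inner product spaces,
with respect to the natural sum inner product on the product. -/
def suppFn2 {E₁ E₂ : Type*} [NormedAddCommGroup E₁] [InnerProductSpace ℝ E₁]
    [NormedAddCommGroup E₂] [InnerProductSpace ℝ E₂]
    (S : Set (E₁ × E₂)) (y : E₁ × E₂) : EReal :=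
  ⨆ p ∈ S, ((⟪p.1, y.1⟫ + ⟪p.2, y.2⟫ : ℝ) : EReal)

/-- The horizon (recession) cone of a set `C`. -/
def horizonCone {E : Type*} [AddCommGroup E] [Module ℝ E] [TopologicalSpace E] (C : Set E) :
    Set E :=
  {w | ∀ x ∈ C, ∀ t : ℝ, 0 ≤ t → x + t • w ∈ closure C}

/-- The lower semicontinuous hull:
`(cl f)(x) = inf {a : ∃ xₖ → x with f (xₖ) → a}`. -/
def lscHull {E : Type*} [TopologicalSpace E] (f : E → EReal) (x : E) : EReal :=
  sInf {a : EReal |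
    ∃ u : ℕ → E, Tendsto u atTop (nhds x) ∧ Tendsto (fun n => f (u n)) atTop (nhds a)}

/-!
Let the primal value `p` be finite and let `A = {(u, r) | ∃ x, f x ≤ r ∧ u - F x ∈ K}`.
Convexity of `f` and `K`-convexity of `F` make `A` convex, and `(0, p) ∉ ri A`, since otherwise
one could move from `(0, p + 1)` past `(0, p)` inside `A` and find feasible points with value
below `p`. Proper separation gives a functional `(u, r) ↦ ψ u + α r` that is bounded below on `A`
by its value at `(0, p)` and is not constant on `A`. Since `A` is stable under adding
`K × [0, ∞)`, `ψ ≥ 0` on `K` and `α ≥ 0`. If `α = 0`, the Slater point forces `ψ` to vanish on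
`K` and `ψ ∘ F` to vanish on `dom f`, hence `ψ` to vanish on `A`, a contradiction. So
`v = ψ / α` is a multiplier whose dual value is at least `p`, and weak duality gives equality and
optimality of `v`.
-/

open Topology

section Separation

variable {W : Type*} [NormedAddCommGroup W] [NormedSpace ℝ W] {C : Set W} {y z : W}

theorem exists_pos_add_smul_sub_mem_of_mem_intrinsicInterior
    (hz : z ∈ intrinsicInterior ℝ C) (hy : y ∈ C) : ∃ ε : ℝ, 0 < ε ∧ z + ε • (z - y) ∈ C := by
  obtain ⟨z', hz', rfl⟩ := mem_intrinsicInterior.1 hz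
  let ray : ℝ → affineSpan ℝ C := fun t =>
    ⟨z' + t • ((z' : W) - y), by
      simpa [vsub_eq_sub, vadd_eq_add, add_comm] using
        (affineSpan ℝ C).smul_vsub_vadd_mem t z'.2 (subset_affineSpan ℝ C hy) z'.2⟩
  have hray : Continuous ray := by fun_prop
  have h0 : ray 0 = z' := by ext; simp [ray]
  have hev : ∀ᶠ t in 𝓝[>] (0 : ℝ), ray t ∈ ((↑) ⁻¹' C : Set (affineSpan ℝ C)) :=
    nhdsWithin_le_nhds <|
      hray.continuousAt.preimage_mem_nhds (mem_interior_iff_mem_nhds.1 (h0 ▸ hz'))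
  obtain ⟨ε, hε, hmem⟩ := (hev.and self_mem_nhdsWithin).exists
  exact ⟨ε, hmem, hε⟩

theorem ConcaveOn.eq_zero_of_nonneg_of_mem_intrinsicInterior {g : W → ℝ} (hg : ConcaveOn ℝ C g)
    (hg_nonneg : ∀ x ∈ C, 0 ≤ g x) (hz : z ∈ intrinsicInterior ℝ C) (hgz : g z = 0) :
    ∀ x ∈ C, g x = 0 := by
  intro x hx
  obtain ⟨ε, hε, hw⟩ := exists_pos_add_smul_sub_mem_of_mem_intrinsicInterior hz hx
  -- `z` lies strictly between `x` and `w = z + ε (z - x)`, so concavity bounds `g x` by `g z = 0`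
  have hcomb : (ε / (1 + ε)) • x + (1 / (1 + ε)) • (z + ε • (z - x)) = z := by
    rw [div_eq_inv_mul, div_eq_inv_mul, mul_smul, mul_smul, ← smul_add]
    rw [inv_smul_eq_iff₀ (by positivity)]
    module
  have hconc := hg.2 hx hw (show 0 ≤ ε / (1 + ε) by positivity)
    (show 0 ≤ 1 / (1 + ε) by positivity) (by field_simp; ring)
  rw [hcomb, hgz, smul_eq_mul, smul_eq_mul] at hconc
  have hgx : ε / (1 + ε) * g x ≤ 0 := by
    nlinarith [hg_nonneg _ hw, show 0 < 1 / (1 + ε) by positivity]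
  exact le_antisymm (nonpos_of_mul_nonpos_right hgx (by positivity)) (hg_nonneg x hx)

theorem exists_le_lt_of_notMem_interior (hC : Convex ℝ C) (hint : (interior C).Nonempty)
    (hz : z ∉ interior C) : ∃ φ : W →L[ℝ] ℝ, (∀ c ∈ C, φ z ≤ φ c) ∧ ∃ c ∈ C, φ z < φ c := by
  obtain ⟨φ, hφ⟩ := geometric_hahn_banach_point_open hC.interior isOpen_interior hz
  have hclosed : IsClosed {c | φ z ≤ φ c} := isClosed_le continuous_const φ.continuous
  refine ⟨φ, fun c hc => ?_, ?_⟩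
  · have : c ∈ closure (interior C) := by
      rw [hC.closure_interior_eq_closure_of_nonempty_interior hint]; exact subset_closure hc
    exact closure_minimal (fun a ha => (hφ a ha).le) hclosed this
  · obtain ⟨c, hc⟩ := hint
    exact ⟨c, interior_subset hc, hφ c hc⟩

theorem exists_le_lt_of_notMem_intrinsicInterior [FiniteDimensional ℝ W] (hC : Convex ℝ C)
    (hne : C.Nonempty) (hz : z ∉ intrinsicInterior ℝ C) :
    ∃ φ : W →L[ℝ] ℝ, (∀ c ∈ C, φ z ≤ φ c) ∧ ∃ c ∈ C, φ z < φ c := by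
  by_cases hz_span : z ∈ affineSpan ℝ C
  case neg =>
    obtain ⟨φ, u, hφz, hφ⟩ := geometric_hahn_banach_point_closed (affineSpan ℝ C).convex
      (affineSpan ℝ C).closed_of_finiteDimensional hz_span
    have hlt : ∀ c ∈ C, φ z < φ c := fun c hc => hφz.trans (hφ c (subset_affineSpan ℝ C hc))
    obtain ⟨c, hc⟩ := hne
    exact ⟨φ, fun c hc => (hlt c hc).le, c, hc, hlt c hc⟩
  have : Nonempty (affineSpan ℝ C) := ⟨⟨z, hz_span⟩⟩
  -- With `z` as origin, the affine span of `C` becomes its direction `V`, and the relative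
  -- interior of `C` becomes the interior of a subset of `V`.
  set V := (affineSpan ℝ C).direction
  let e : V ≃ᵃⁱ[ℝ] affineSpan ℝ C := AffineIsometryEquiv.vaddConst ℝ ⟨z, hz_span⟩
  let D : Set V := e ⁻¹' ((↑) ⁻¹' C)
  have hmemD : ∀ v : V, v ∈ D ↔ (v : W) + z ∈ C := fun _ => Iff.rfl
  have hDconv : Convex ℝ D :=
    hC.affine_preimage ((affineSpan ℝ C).subtype.comp e.toAffineEquiv.toAffineMap)
  have hinteriorD : interior D = e ⁻¹' interior ((↑) ⁻¹' C) :=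
    (e.toHomeomorph.preimage_interior _).symm
  have hDint : (interior D).Nonempty := by
    obtain ⟨_, c, hc, rfl⟩ := hne.intrinsicInterior hC
    exact ⟨e.symm c, by simpa [hinteriorD] using hc⟩
  have h0 : (0 : V) ∉ interior D := by
    rw [hinteriorD]
    exact fun h => hz (mem_intrinsicInterior.2 ⟨_, h, by simp [e]⟩)
  obtain ⟨ψ, hψD, d, hd, hψd⟩ := exists_le_lt_of_notMem_interior hDconv hDint h0
  obtain ⟨φ, hφψ, -⟩ := exists_extension_norm_eq V ψ
  have hsub : ∀ c ∈ C, c - z ∈ V := fun c hc =>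
    AffineSubspace.vsub_mem_direction (subset_affineSpan ℝ C hc) hz_span
  refine ⟨φ, fun c hc => ?_, d + z, (hmemD d).1 hd, ?_⟩
  · have := hψD ⟨c - z, hsub c hc⟩ ((hmemD _).2 (by simpa using hc))
    rw [map_zero, ← hφψ, map_sub] at this
    linarith
  · rw [map_zero, ← hφψ] at hψd
    rw [map_add]
    linarith

end Separation

def IsKConvex {X Y : Type*} [AddCommGroup X] [Module ℝ X] [AddCommGroup Y] [Module ℝ Y]
    (K : Set Y) (F : X → Y) : Prop :=
  ∀ x y : X, ∀ l : ℝ, l ∈ Set.Icc (0 : ℝ) 1 → l • F x + (1 - l) • F y - F (l • x + (1 - l) • y) ∈ K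

theorem EReal.exists_coe_ge_of_lt_top {a : EReal} (ha : a < ⊤) : ∃ r : ℝ, a ≤ r :=
  let ⟨r, hr, _⟩ := EReal.exists_between_coe_real ha
  ⟨r, hr.le⟩

theorem EReal.coe_le_add_coe_of_forall {a : EReal} {b c : ℝ} (h : ∀ r : ℝ, a ≤ r → b ≤ r + c) :
    (b : EReal) ≤ a + c := by
  induction a using EReal.rec with
  | bot => linarith [h (b - c - 1) bot_le]
  | coe a => exact_mod_cast h a le_rfl
  | top => simp

theorem map_nonneg_of_forall_le_map_add_smul {M 𝓕 : Type*} [AddCommGroup M] [Module ℝ M]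
    [FunLike 𝓕 M ℝ] [LinearMapClass 𝓕 ℝ M ℝ] (φ : 𝓕) {a d : M} {c : ℝ}
    (h : ∀ s : ℝ, 0 ≤ s → c ≤ φ (a + s • d)) : 0 ≤ φ d := by
  by_contra! hd
  have := h ((|φ a - c| + 1) / -φ d) (div_nonneg (by positivity) (neg_nonneg.2 hd.le))
  rw [map_add, map_smul, smul_eq_mul, div_neg, neg_mul, div_mul_cancel₀ _ hd.ne] at this
  linarith [le_abs_self (φ a - c)]

theorem EConvexOn.convex_edom {X : Type*} [AddCommGroup X] [Module ℝ X] {f : X → EReal}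
    (hf : EConvexOn f) : Convex ℝ (edom f) := by
  intro x hx y hy a b ha hb hab
  obtain ⟨r, hr⟩ := EReal.exists_coe_ge_of_lt_top hx
  obtain ⟨s, hs⟩ := EReal.exists_coe_ge_of_lt_top hy
  have := hf (show ((x, r) : X × ℝ) ∈ _ from hr) (show ((y, s) : X × ℝ) ∈ _ from hs) ha hb hab
  exact this.trans_lt (EReal.coe_lt_top _)

namespace IsCone

variable {V : Type*} [AddCommGroup V] [Module ℝ V] {K : Set V}

theorem zero_mem (hK : IsCone K) (hne : K.Nonempty) : (0 : V) ∈ K := by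
  obtain ⟨k, hk⟩ := hne
  simpa using hK le_rfl hk

theorem add_mem (hK : IsCone K) (hK_conv : Convex ℝ K) {x y : V} (hx : x ∈ K) (hy : y ∈ K) :
    x + y ∈ K := by
  have := hK zero_le_two (hK_conv hx hy (by norm_num : (0 : ℝ) ≤ 1 / 2)
    (by norm_num : (0 : ℝ) ≤ 1 / 2) (by norm_num))
  rwa [smul_add, smul_smul, smul_smul, mul_one_div_cancel two_ne_zero, one_smul, one_smul] at this

end IsCone

theorem lagrangian_iInf_le_primal {X Y : Type*} [NormedAddCommGroup Y] [InnerProductSpace ℝ Y]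
    {f : X → EReal} {K : Set Y} {F : X → Y} {v : Y} (hv : v ∈ -polarCone K) :
    ⨅ x, f x + ((⟪v, F x⟫ : ℝ) : EReal) ≤ ⨅ x ∈ {x | F x ∈ -K}, f x := by
  refine le_iInf₂ fun x hx => (iInf_le _ x).trans ?_
  have hvFx : ⟪v, F x⟫ ≤ 0 := by simpa using hv (-F x) hx
  calc f x + ((⟪v, F x⟫ : ℝ) : EReal) ≤ f x + 0 := by gcongr; exact_mod_cast hvFx
    _ = f x := add_zero _

/-- The epigraph of the optimal value of the perturbed problems `min f(x) s.t. F(x) - u ∈ -K`. -/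
def valueEpigraph {X Y : Type*} [AddCommGroup Y] (f : X → EReal) (K : Set Y) (F : X → Y) :
    Set (Y × ℝ) :=
  {q | ∃ x, f x ≤ q.2 ∧ q.1 - F x ∈ K}

section ValueEpigraph

variable {X Y : Type*} [AddCommGroup Y] {f : X → EReal} {K : Set Y} {F : X → Y}

theorem mk_mem_valueEpigraph {x : X} {r : ℝ} {k : Y} (hx : f x ≤ r) (hk : k ∈ K) :
    (F x + k, r) ∈ valueEpigraph f K F :=
  ⟨x, hx, by simpa using hk⟩

theorem add_mem_valueEpigraph [Module ℝ Y] (hK : IsCone K) (hK_conv : Convex ℝ K) {q : Y × ℝ}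
    (hq : q ∈ valueEpigraph f K F) {k : Y} (hk : k ∈ K) {s : ℝ} (hs : 0 ≤ s) :
    q + (k, s) ∈ valueEpigraph f K F := by
  obtain ⟨x, hx, hqx⟩ := hq
  refine ⟨x, hx.trans ?_, ?_⟩
  · exact_mod_cast le_add_of_nonneg_right hs
  · simpa [add_sub_right_comm] using hK.add_mem hK_conv hqx hk

theorem convex_valueEpigraph [AddCommGroup X] [Module ℝ X] [Module ℝ Y] (hf : EConvexOn f)
    (hK : IsCone K) (hK_conv : Convex ℝ K) (hF : IsKConvex K F) :
    Convex ℝ (valueEpigraph f K F) := by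
  rintro q₁ ⟨x₁, hfx₁, hk₁⟩ q₂ ⟨x₂, hfx₂, hk₂⟩ a b ha hb hab
  refine ⟨a • x₁ + b • x₂, ?_, ?_⟩
  · simpa using hf (show ((x₁, q₁.2) : X × ℝ) ∈ _ from hfx₁)
      (show ((x₂, q₂.2) : X × ℝ) ∈ _ from hfx₂) ha hb hab
  · obtain rfl : b = 1 - a := by linarith
    have hsum := hK.add_mem hK_conv (hK.add_mem hK_conv (hK ha hk₁) (hK hb hk₂))
      (hF x₁ x₂ a ⟨ha, by linarith⟩)
    convert hsum using 1
    simp only [Prod.fst_add, Prod.smul_fst]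
    module

end ValueEpigraph

theorem zero_mk_notMem_intrinsicInterior_valueEpigraph {X Y : Type*} [NormedAddCommGroup Y]
    [NormedSpace ℝ Y] {f : X → EReal} {K : Set Y} {F : X → Y} {p₀ : ℝ}
    (hp : ⨅ x ∈ {x | F x ∈ -K}, f x = p₀) :
    ((0 : Y), p₀) ∉ intrinsicInterior ℝ (valueEpigraph f K F) := by
  intro hri
  obtain ⟨x₁, hx₁, hfx₁⟩ : ∃ x ∈ {x | F x ∈ -K}, f x < ↑(p₀ + 1) := by
    simpa only [iInf_lt_iff, exists_prop] using hp.trans_lt (EReal.coe_lt_coe_iff.2 (lt_add_one p₀))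
  obtain ⟨ε, hε, x₂, hfx₂, hx₂⟩ := exists_pos_add_smul_sub_mem_of_mem_intrinsicInterior hri
    (show ((0 : Y), p₀ + 1) ∈ valueEpigraph f K F from ⟨x₁, hfx₁.le, by simpa using hx₁⟩)
  have hp_le : (p₀ : EReal) ≤ f x₂ := hp ▸ iInf₂_le x₂ (by simpa using hx₂)
  have hfx₂' : f x₂ ≤ ((p₀ - ε : ℝ) : EReal) := by
    convert hfx₂ using 2
    simp only [Prod.mk_sub_mk, sub_self, sub_add_cancel_left, Prod.smul_mk, smul_zero, smul_eq_mul,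
      mul_neg, mul_one, Prod.mk_add_mk, add_zero]
    ring
  linarith [EReal.coe_le_coe_iff.1 (hp_le.trans hfx₂')]

section Slater

variable {X Y : Type*} [NormedAddCommGroup X] [NormedSpace ℝ X] [NormedAddCommGroup Y]
  [NormedSpace ℝ Y] {f : X → EReal} {K : Set Y} {F : X → Y}

theorem map_fst_eq_zero_of_slater (hf : EConvexOn f) (hK : IsCone K) (hK_conv : Convex ℝ K)
    (hF : IsKConvex K F) {x₀ : X} (hx₀ : x₀ ∈ intrinsicInterior ℝ (edom f))
    (hFx₀ : F x₀ ∈ intrinsicInterior ℝ (-K)) (ψ : Y →ₗ[ℝ] ℝ) (hψK : ∀ k ∈ K, 0 ≤ ψ k)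
    (hψ : ∀ q ∈ valueEpigraph f K F, 0 ≤ ψ q.1) :
    ∀ q ∈ valueEpigraph f K F, ψ q.1 = 0 := by
  have hnegFx₀ : -F x₀ ∈ K := (intrinsicInterior_subset hFx₀ : F x₀ ∈ -K)
  have h0K : (0 : Y) ∈ K := hK.zero_mem ⟨_, hnegFx₀⟩
  have hψF : ∀ x ∈ edom f, 0 ≤ ψ (F x) := fun x hx => by
    obtain ⟨r, hr⟩ := EReal.exists_coe_ge_of_lt_top hx
    simpa using hψ _ (mk_mem_valueEpigraph hr h0K)
  have hψFx₀ : ψ (F x₀) = 0 :=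
    le_antisymm (by simpa using hψK _ hnegFx₀) (hψF x₀ (intrinsicInterior_subset hx₀))
  have hψK_zero : ∀ k ∈ K, ψ k = 0 := fun k hk => by
    have := ((-ψ).concaveOn hK_conv.neg).eq_zero_of_nonneg_of_mem_intrinsicInterior
      (fun y hy => by simpa using hψK _ hy) hFx₀ (by simp [hψFx₀]) (-k) (by simpa using hk)
    simpa using this
  -- `ψ` kills the `K`-valued convexity defect of `F`, so `ψ ∘ F` is affine along segments
  have hψF_concave : ConcaveOn ℝ (edom f) (fun x => ψ (F x)) := by
    refine ⟨hf.convex_edom, fun x _ y _ a b ha hb hab => ?_⟩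
    obtain rfl : b = 1 - a := by linarith
    have := hψK_zero _ (hF x y a ⟨ha, by linarith⟩)
    simp only [map_sub, map_add, map_smul, smul_eq_mul] at this ⊢
    linarith
  have hψF_zero := hψF_concave.eq_zero_of_nonneg_of_mem_intrinsicInterior hψF hx₀ hψFx₀
  rintro q ⟨x, hfx, hqx⟩
  have := hψK_zero _ hqx
  rw [map_sub, hψF_zero x (hfx.trans_lt (EReal.coe_lt_top _)), sub_zero] at this
  exact this

end Slater

theorem exists_lagrange_multiplier_of_separation {X Y : Type*} [NormedAddCommGroup Y]
    [InnerProductSpace ℝ Y] [CompleteSpace Y] {f : X → EReal} {K : Set Y} {F : X → Y}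
    (h0K : (0 : Y) ∈ K) (ψ : Y →L[ℝ] ℝ) (hψK : ∀ k ∈ K, 0 ≤ ψ k) {α p₀ : ℝ} (hα : 0 < α)
    (hsep : ∀ q ∈ valueEpigraph f K F, p₀ * α ≤ ψ q.1 + q.2 * α) :
    ∃ v ∈ -polarCone K, ∀ x, (p₀ : EReal) ≤ f x + ((⟪v, F x⟫ : ℝ) : EReal) := by
  set v := α⁻¹ • (InnerProductSpace.toDual ℝ Y).symm ψ
  have hv : ∀ u, ⟪v, u⟫ = ψ u / α := fun u => by
    simp [v, real_inner_smul_left, div_eq_inv_mul]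
  refine ⟨v, fun k hk => ?_, fun x => EReal.coe_le_add_coe_of_forall fun r hr => ?_⟩
  · simpa [inner_neg_left, hv] using div_nonneg (hψK k hk) hα.le
  · have := hsep _ (mk_mem_valueEpigraph hr h0K)
    rw [add_zero] at this
    rw [hv, ← sub_le_iff_le_add', le_div_iff₀ hα]
    linarith

theorem exists_lagrange_multiplier_of_slater {X Y : Type*} [NormedAddCommGroup X] [NormedSpace ℝ X]
    [NormedAddCommGroup Y] [InnerProductSpace ℝ Y] [FiniteDimensional ℝ Y]
    {f : X → EReal} {K : Set Y} {F : X → Y} (hf : EConvexOn f) (hK : IsCone K)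
    (hK_conv : Convex ℝ K) (hF : IsKConvex K F)
    (hCQ : (F '' intrinsicInterior ℝ (edom f) ∩ intrinsicInterior ℝ (-K)).Nonempty) {p₀ : ℝ}
    (hp : ⨅ x ∈ {x | F x ∈ -K}, f x = p₀) :
    ∃ v ∈ -polarCone K, ∀ x, (p₀ : EReal) ≤ f x + ((⟪v, F x⟫ : ℝ) : EReal) := by
  obtain ⟨_, ⟨x₀, hx₀, rfl⟩, hFx₀⟩ := hCQ
  have h0K : (0 : Y) ∈ K := hK.zero_mem ⟨-F x₀, (intrinsicInterior_subset hFx₀ : F x₀ ∈ -K)⟩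
  obtain ⟨r₀, hr₀⟩ := EReal.exists_coe_ge_of_lt_top
    (intrinsicInterior_subset hx₀ : x₀ ∈ edom f)
  have hx₀A : (F x₀, r₀) ∈ valueEpigraph f K F := by
    simpa using mk_mem_valueEpigraph (K := K) hr₀ h0K
  obtain ⟨φ, hφA, q₁, hq₁, hφq₁⟩ := exists_le_lt_of_notMem_intrinsicInterior
    (convex_valueEpigraph hf hK hK_conv hF) ⟨_, hx₀A⟩
    (zero_mk_notMem_intrinsicInterior_valueEpigraph hp)
  obtain ⟨ψ, α, hφ⟩ : ∃ (ψ : Y →L[ℝ] ℝ) (α : ℝ), ∀ q : Y × ℝ, φ q = ψ q.1 + q.2 * α :=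
    ⟨φ.comp (ContinuousLinearMap.inl ℝ Y ℝ), φ (0, 1), fun q => by
      conv_lhs => rw [show q = (q.1, 0) + q.2 • (0, 1) by ext <;> simp]
      rw [map_add, map_smul, smul_eq_mul]
      rfl⟩
  have hsep : ∀ q ∈ valueEpigraph f K F, p₀ * α ≤ ψ q.1 + q.2 * α := fun q hq => by
    simpa [hφ] using hφA q hq
  have hψK : ∀ k ∈ K, 0 ≤ ψ k := fun k hk => by
    simpa [hφ] using map_nonneg_of_forall_le_map_add_smul φ (a := (F x₀, r₀)) (d := (k, 0))
      fun s hs => hφA _ (by simpa using add_mem_valueEpigraph hK hK_conv hx₀A (hK hs hk) le_rfl)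
  have hα_nonneg : 0 ≤ α := by
    simpa [hφ] using map_nonneg_of_forall_le_map_add_smul φ (a := (F x₀, r₀)) (d := (0, 1))
      fun s hs => hφA _ (by simpa using add_mem_valueEpigraph hK hK_conv hx₀A h0K hs)
  have hα : 0 < α := by
    refine hα_nonneg.lt_of_ne' fun hα => ?_
    have := map_fst_eq_zero_of_slater hf hK hK_conv hF hx₀ hFx₀ ψ hψK
      (fun q hq => by simpa [hα] using hsep q hq) q₁ hq₁
    simp only [hφ, hα, mul_zero, add_zero, map_zero] at hφq₁
    exact hφq₁.ne' this
  exact exists_lagrange_multiplier_of_separation h0K ψ hψK hα hsep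

variable {E E₁ E₂ : Type*}
  [NormedAddCommGroup E] [InnerProductSpace ℝ E] [FiniteDimensional ℝ E]
  [NormedAddCommGroup E₁] [InnerProductSpace ℝ E₁] [FiniteDimensional ℝ E₁]
  [NormedAddCommGroup E₂] [InnerProductSpace ℝ E₂] [FiniteDimensional ℝ E₂]

theorem conic_program_strong_duality_general
    (f : E₁ → EReal) (hf_conv : EConvexOn f)
    (K : Set E₂) (hK_cone : IsCone K) (hK_conv : Convex ℝ K)
    (F : E₁ → E₂)
    (hF : ∀ x y : E₁, ∀ l : ℝ, l ∈ Set.Icc (0 : ℝ) 1 →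
      l • F x + (1 - l) • F y - F (l • x + (1 - l) • y) ∈ K)
    (hCQ : (F '' intrinsicInterior ℝ (edom f) ∩ intrinsicInterior ℝ (-K)).Nonempty) :
    ∃ v ∈ -polarCone K,
      (⨅ x ∈ {x : E₁ | F x ∈ -K}, f x)
        = (⨅ x : E₁, (f x + ((⟪v, F x⟫ : ℝ) : EReal))) ∧
      ∀ w ∈ -polarCone K,
        (⨅ x : E₁, (f x + ((⟪w, F x⟫ : ℝ) : EReal)))
          ≤ ⨅ x : E₁, (f x + ((⟪v, F x⟫ : ℝ) : EReal)) := by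
  suffices ∃ v ∈ -polarCone K,
      (⨅ x ∈ {x : E₁ | F x ∈ -K}, f x) ≤ ⨅ x : E₁, (f x + ((⟪v, F x⟫ : ℝ) : EReal)) by
    obtain ⟨v, hv, hle⟩ := this
    exact ⟨v, hv, le_antisymm hle (lagrangian_iInf_le_primal hv),
      fun w hw => (lagrangian_iInf_le_primal hw).trans hle⟩
  obtain ⟨_, ⟨x₀, hx₀, rfl⟩, hFx₀⟩ := hCQ
  have hp_lt_top : (⨅ x ∈ {x : E₁ | F x ∈ -K}, f x) < ⊤ :=
    (iInf₂_le x₀ (intrinsicInterior_subset hFx₀ : F x₀ ∈ -K)).trans_lt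
      (intrinsicInterior_subset hx₀ : x₀ ∈ edom f)
  generalize hp : (⨅ x ∈ {x : E₁ | F x ∈ -K}, f x) = p at hp_lt_top ⊢
  induction p using EReal.rec with
  | bot => exact ⟨0, by simp [polarCone], bot_le⟩
  | coe p₀ =>
    obtain ⟨v, hv, hle⟩ :=
      exists_lagrange_multiplier_of_slater hf_conv hK_cone hK_conv hF ⟨_, ⟨x₀, hx₀, rfl⟩, hFx₀⟩ hp
    exact ⟨v, hv, le_iInf hle⟩
  | top => exact absurd hp_lt_top (lt_irrefl ⊤)

/-- Strong Lagrangian duality with dual attainment for the conic program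
`min f(x) s.t. F(x) ∈ -K`, under the Slater-type condition `F(ri(dom f)) ∩ ri(-K) ≠ ∅`. -/
theorem conic_program_strong_duality
    (f : E₁ → EReal) (hf_proper : EProper f) (hf_conv : EConvexOn f)
    (K : Set E₂) (hK_cone : IsCone K) (hK_closed : IsClosed K) (hK_conv : Convex ℝ K)
    (F : E₁ → E₂)
    (hF : ∀ x y : E₁, ∀ l : ℝ, l ∈ Set.Icc (0 : ℝ) 1 →
      l • F x + (1 - l) • F y - F (l • x + (1 - l) • y) ∈ K)
    (hCQ : (F '' intrinsicInterior ℝ (edom f) ∩ intrinsicInterior ℝ (-K)).Nonempty) :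
    ∃ v ∈ -polarCone K,
      (⨅ x ∈ {x : E₁ | F x ∈ -K}, f x)
        = (⨅ x : E₁, (f x + ((⟪v, F x⟫ : ℝ) : EReal))) ∧
      ∀ w ∈ -polarCone K,
        (⨅ x : E₁, (f x + ((⟪w, F x⟫ : ℝ) : EReal)))
          ≤ ⨅ x : E₁, (f x + ((⟪v, F x⟫ : ℝ) : EReal)) :=
  conic_program_strong_duality_general f hf_conv K hK_cone hK_conv F hF hCQ
end
end

section
/- Let g : ℝⁿ → ℝ ∪ {+∞} be proper, convex and permutation invariant (g(σ(v)) = g(v) for every v ∈ ℝⁿ and every permutation σ of the coordinates), and let λ : Sⁿ → ℝⁿ assign to each real symmetric n×n matrix X the vector λ(X) = (λ₁(X), …, λ_n(X)) of its eigenvalues in nonincreasing order. Then the spectral function g ∘ λ : Sⁿ → ℝ ∪ {+∞} is convex, and its Fenchel conjugate satisfies (g ∘ λ)* = g* ∘ λ. -/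
open scoped RealInnerProductSpace Pointwise
open Filter

noncomputable section

variable {E E₁ E₂ : Type*}
  [NormedAddCommGroup E] [InnerProductSpace ℝ E] [FiniteDimensional ℝ E]
  [NormedAddCommGroup E₁] [InnerProductSpace ℝ E₁] [FiniteDimensional ℝ E₁]
  [NormedAddCommGroup E₂] [InnerProductSpace ℝ E₂] [FiniteDimensional ℝ E₂]

/-- The eigenvalues of a real symmetric matrix, arranged in nonincreasing order. -/
def eigDesc {n : ℕ} {X : Matrix (Fin n) (Fin n) ℝ} (hX : X.IsHermitian) : Fin n → ℝ :=
  fun i => hX.eigenvalues (Tuple.sort (fun j => -hX.eigenvalues j) i)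

open Classical in
/-- The spectral function `g ∘ λ` on the space of real symmetric matrices, extended by `+∞`
off the symmetric matrices. -/
def specFn {n : ℕ} (g : (Fin n → ℝ) → EReal) (X : Matrix (Fin n) (Fin n) ℝ) : EReal :=
  if hX : X.IsHermitian then g (eigDesc hX) else ⊤

/-!
If `R` is orthogonal and `A = V diag(λ(A)) Vᵀ`, then the diagonal of `Rᵀ A R` is `(Q ⊙ Q) λ(A)`
with `Q = Rᵀ V` orthogonal, and `Q ⊙ Q` is doubly stochastic, hence (Birkhoff) a convex
combination of permutation matrices. So a convex permutation-invariant `g` satisfies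
`g (diag (Rᵀ A R)) ≤ g (λ(A))`. Taking `R` to diagonalize `αX + βZ` writes `λ(αX + βZ)` as
`α diag(Rᵀ X R) + β diag(Rᵀ Z R)`, which gives convexity of `g ∘ λ`. The same doubly stochastic
matrix and the rearrangement inequality give von Neumann's trace inequality
`tr(Y X) ≤ λ(Y) ⬝ᵥ λ(X)`, with equality for `X` diagonal in an eigenbasis of `Y` with its
eigenvalues sorted; this yields `(g ∘ λ)* = g* ∘ λ`.
-/

open Matrix

section EConvexOn

variable {F : Type*} [AddCommGroup F] [Module ℝ F] {g : F → EReal}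

theorem EConvexOn.apply_add_le (hg : EConvexOn g) {u v : F} {s t : ℝ} (hu : g u ≤ s)
    (hv : g v ≤ t) {α β : ℝ} (hα : 0 ≤ α) (hβ : 0 ≤ β) (hαβ : α + β = 1) :
    g (α • u + β • v) ≤ ((α * s + β * t : ℝ) : EReal) :=
  hg (x := (u, s)) (y := (v, t)) hu hv hα hβ hαβ

theorem EConvexOn.convex_le (hg : EConvexOn g) (s : ℝ) : Convex ℝ {v | g v ≤ s} := by
  intro u hu v hv α β hα hβ hαβ
  simpa [← add_mul, hαβ] using hg.apply_add_le hu hv hα hβ hαβ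

end EConvexOn

theorem isLinearMap_mulVec_left {m : Type*} [Fintype m] (u : m → ℝ) :
    IsLinearMap ℝ fun B : Matrix m m ℝ => B *ᵥ u :=
  ⟨fun B C => add_mulVec B C u, fun c B => smul_mulVec c B u⟩

section DoublyStochastic

variable {m : Type*} [Fintype m] [DecidableEq m]

theorem doublyStochastic_subset_of_convex {S : Set (Matrix m m ℝ)} (hS : Convex ℝ S)
    (hperm : ∀ σ : Equiv.Perm m, σ.permMatrix ℝ ∈ S) :
    (doublyStochastic ℝ m : Set (Matrix m m ℝ)) ⊆ S := by
  rw [doublyStochastic_eq_convexHull_permMatrix]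
  exact convexHull_min (by rintro _ ⟨σ, rfl⟩; exact hperm σ) hS

theorem Monovary.dotProduct_mulVec_le {a b : m → ℝ} (hab : Monovary a b)
    {B : Matrix m m ℝ} (hB : B ∈ doublyStochastic ℝ m) : a ⬝ᵥ (B *ᵥ b) ≤ a ⬝ᵥ b := by
  refine doublyStochastic_subset_of_convex (S := {B | a ⬝ᵥ (B *ᵥ b) ≤ a ⬝ᵥ b}) ?_ (fun σ => ?_)
    hB
  · refine convex_halfSpace_le ⟨fun B C => ?_, fun c B => ?_⟩ _
    · rw [add_mulVec, dotProduct_add]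
    · rw [smul_mulVec, dotProduct_smul]
  · simp only [Set.mem_ofPred_eq, permMatrix_mulVec]
    exact hab.sum_mul_comp_perm_le_sum_mul

theorem hadamard_self_mem_doublyStochastic {Q : Matrix m m ℝ} (hQ : Qᵀ * Q = 1) :
    Q ⊙ Q ∈ doublyStochastic ℝ m := by
  have hQ' : Q * Qᵀ = 1 := mul_eq_one_comm.mp hQ
  refine mem_doublyStochastic_iff_sum.2 ⟨fun i j => mul_self_nonneg _, fun i => ?_, fun j => ?_⟩
  · simpa [mul_apply, one_apply] using congrFun (congrFun hQ' i) i
  · simpa [mul_apply, one_apply] using congrFun (congrFun hQ j) j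

theorem EConvexOn.apply_mulVec_le {g : (m → ℝ) → EReal} (hg : EConvexOn g)
    (hg_perm : ∀ σ : Equiv.Perm m, ∀ v, g (v ∘ σ) = g v)
    {B : Matrix m m ℝ} (hB : B ∈ doublyStochastic ℝ m) (u : m → ℝ) : g (B *ᵥ u) ≤ g u := by
  refine EReal.le_of_forall_lt_iff_le.1 fun s hs => ?_
  refine doublyStochastic_subset_of_convex (S := {B | g (B *ᵥ u) ≤ s}) ?_ (fun σ => ?_) hB
  · exact (hg.convex_le s).is_linear_preimage (isLinearMap_mulVec_left u)
  · simpa only [Set.mem_ofPred_eq, permMatrix_mulVec, hg_perm] using hs.le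

end DoublyStochastic

theorem transpose_mul_conj_mul_cancel {m R : Type*} [Fintype m] [DecidableEq m] [Semiring R]
    {U : Matrix m m R} (hU : Uᵀ * U = 1) (D : Matrix m m R) : Uᵀ * (U * D * Uᵀ) * U = D := by
  rw [← Matrix.mul_assoc, ← Matrix.mul_assoc, hU, Matrix.one_mul, Matrix.mul_assoc, hU,
    Matrix.mul_one]

section OrthogonalConjugation

variable {m R : Type*} [Fintype m] [DecidableEq m] [CommSemiring R]

theorem diag_mul_diagonal_mul_transpose (Q : Matrix m m R) (d : m → R) :
    (Q * diagonal d * Qᵀ).diag = (Q ⊙ Q) *ᵥ d := by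
  ext i
  simp [diag, mul_apply, mulVec, dotProduct, diagonal_apply, mul_comm, mul_left_comm]

theorem trace_mul_diagonal_mul_transpose_mul (U X : Matrix m m R) (y : m → R) :
    trace (U * diagonal y * Uᵀ * X) = y ⬝ᵥ (Uᵀ * X * U).diag := by
  rw [Matrix.mul_assoc, Matrix.mul_assoc, trace_mul_comm, Matrix.mul_assoc]
  simp [trace, diagonal_mul, dotProduct]

end OrthogonalConjugation


theorem exists_perm_antitone_comp {α : Type*} [LinearOrder α] {n : ℕ} (x : Fin n → α) :
    ∃ σ : Equiv.Perm (Fin n), Antitone (x ∘ σ) :=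
  ⟨Tuple.sort (OrderDual.toDual ∘ x), monotone_toDual_comp_iff.1 (Tuple.monotone_sort _)⟩

theorem antitone_eq_of_map_univ_val_eq {α : Type*} [PartialOrder α] {n : ℕ} {d e : Fin n → α}
    (hd : Antitone d) (he : Antitone e) (h : Finset.univ.val.map d = Finset.univ.val.map e) :
    d = e := by
  simp only [Fin.univ_val_map, Multiset.coe_eq_coe] at h
  exact List.ofFn_injective <|
    h.eq_of_pairwise' hd.sortedGE_ofFn.pairwise he.sortedGE_ofFn.pairwise

section Eigenvalues

variable {n : ℕ}

theorem antitone_eigDesc {X : Matrix (Fin n) (Fin n) ℝ} (hX : X.IsHermitian) :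
    Antitone (eigDesc hX) :=
  fun _ _ hij => neg_le_neg_iff.1 (Tuple.monotone_sort (fun j => -hX.eigenvalues j) hij)

theorem exists_orthogonal_eq_mul_diagonal_eigDesc {X : Matrix (Fin n) (Fin n) ℝ}
    (hX : X.IsHermitian) :
    ∃ V : Matrix (Fin n) (Fin n) ℝ, Vᵀ * V = 1 ∧ X = V * diagonal (eigDesc hX) * Vᵀ := by
  set U : Matrix (Fin n) (Fin n) ℝ := (hX.eigenvectorUnitary : Matrix (Fin n) (Fin n) ℝ)
  set σ := Tuple.sort (fun j => -hX.eigenvalues j)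
  have hU : Uᵀ * U = 1 := by
    simpa [star_eq_conjTranspose] using (mem_unitaryGroup_iff').mp hX.eigenvectorUnitary.2
  have hX_eq : X = U * diagonal hX.eigenvalues * Uᵀ := by
    simpa [star_eq_conjTranspose, Function.comp_def] using hX.spectral_theorem
  refine ⟨U.submatrix id σ, ?_, ?_⟩
  · rw [transpose_submatrix, ← submatrix_mul _ _ _ id _ Function.bijective_id, hU,
      submatrix_one_equiv]
  · have hd : diagonal (eigDesc hX) = (diagonal hX.eigenvalues).submatrix σ σ := by
      rw [submatrix_diagonal_equiv]; rfl
    rw [hd, transpose_submatrix, submatrix_mul_equiv, submatrix_mul_equiv, submatrix_id_id,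
      ← hX_eq]

open Polynomial in
theorem eigDesc_eq_of_charpoly_eq {A : Matrix (Fin n) (Fin n) ℝ} (hA : A.IsHermitian)
    {d : Fin n → ℝ} (hd : Antitone d) (h : A.charpoly = ∏ i, (X - C (d i))) :
    eigDesc hA = d := by
  refine antitone_eq_of_map_univ_val_eq (antitone_eigDesc hA) hd ?_
  have hroots : A.charpoly.roots = Finset.univ.val.map d := by
    rw [h, roots_prod _ _ (Finset.prod_ne_zero_iff.2 fun i _ => X_sub_C_ne_zero (d i))]
    simp
  rw [← hroots, hA.roots_charpoly_eq_eigenvalues]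
  change Multiset.map (hA.eigenvalues ∘ Tuple.sort _) _ = _
  rw [← Multiset.map_map, Multiset.map_univ_val_equiv]
  rfl

theorem eigDesc_mul_diagonal_mul_transpose {V : Matrix (Fin n) (Fin n) ℝ} (hV : Vᵀ * V = 1)
    {d : Fin n → ℝ} (hd : Antitone d) (h : (V * diagonal d * Vᵀ).IsHermitian) :
    eigDesc h = d := by
  refine eigDesc_eq_of_charpoly_eq h hd ?_
  rw [charpoly_mul_comm, ← Matrix.mul_assoc, hV, Matrix.one_mul, charpoly_diagonal]

theorem isHermitian_mul_diagonal_mul_transpose (V : Matrix (Fin n) (Fin n) ℝ) (d : Fin n → ℝ) :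
    (V * diagonal d * Vᵀ).IsHermitian := by
  simpa using isHermitian_mul_mul_conjTranspose V (isHermitian_diagonal d)

theorem Matrix.IsHermitian.exists_doublyStochastic_diag_eq {A R : Matrix (Fin n) (Fin n) ℝ}
    (hA : A.IsHermitian) (hR : Rᵀ * R = 1) :
    ∃ B ∈ doublyStochastic ℝ (Fin n), (Rᵀ * A * R).diag = B *ᵥ eigDesc hA := by
  obtain ⟨V, hV, hA_eq⟩ := exists_orthogonal_eq_mul_diagonal_eigDesc hA
  have hQ : (Rᵀ * V)ᵀ * (Rᵀ * V) = 1 := by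
    rw [transpose_mul, transpose_transpose, Matrix.mul_assoc, ← Matrix.mul_assoc R,
      mul_eq_one_comm.mp hR, Matrix.one_mul, hV]
  refine ⟨_, hadamard_self_mem_doublyStochastic hQ, ?_⟩
  rw [← diag_mul_diagonal_mul_transpose]
  conv_lhs => rw [hA_eq]
  simp only [transpose_mul, transpose_transpose, Matrix.mul_assoc]

end Eigenvalues

section SpectralFunction

variable {n : ℕ} {g : (Fin n → ℝ) → EReal}

theorem specFn_of_isHermitian {X : Matrix (Fin n) (Fin n) ℝ} (hX : X.IsHermitian) :
    specFn g X = g (eigDesc hX) :=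
  dif_pos hX

theorem specFn_of_not_isHermitian {X : Matrix (Fin n) (Fin n) ℝ} (hX : ¬X.IsHermitian) :
    specFn g X = ⊤ :=
  dif_neg hX

theorem isHermitian_of_specFn_le {X : Matrix (Fin n) (Fin n) ℝ} {s : ℝ}
    (h : specFn g X ≤ s) : X.IsHermitian := by
  by_contra hX
  rw [specFn_of_not_isHermitian hX] at h
  exact EReal.coe_lt_top s |>.not_ge h

theorem trace_mul_le_dotProduct_eigDesc {X Y : Matrix (Fin n) (Fin n) ℝ} (hY : Y.IsHermitian)
    (hX : X.IsHermitian) : trace (Y * X) ≤ eigDesc hY ⬝ᵥ eigDesc hX := by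
  obtain ⟨U, hU, hY_eq⟩ := exists_orthogonal_eq_mul_diagonal_eigDesc hY
  obtain ⟨B, hB, hdiag⟩ := hX.exists_doublyStochastic_diag_eq hU
  calc trace (Y * X) = eigDesc hY ⬝ᵥ (Uᵀ * X * U).diag := by
        conv_lhs => rw [hY_eq]
        exact trace_mul_diagonal_mul_transpose_mul U X _
    _ = eigDesc hY ⬝ᵥ (B *ᵥ eigDesc hX) := by rw [hdiag]
    _ ≤ eigDesc hY ⬝ᵥ eigDesc hX :=
        ((antitone_eigDesc hY).monovary (antitone_eigDesc hX)).dotProduct_mulVec_le hB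

theorem exists_eigDesc_eq_and_trace_mul_eq {Y : Matrix (Fin n) (Fin n) ℝ} (hY : Y.IsHermitian)
    {d : Fin n → ℝ} (hd : Antitone d) :
    ∃ (X : Matrix (Fin n) (Fin n) ℝ) (hX : X.IsHermitian),
      eigDesc hX = d ∧ trace (Y * X) = eigDesc hY ⬝ᵥ d := by
  obtain ⟨V, hV, hY_eq⟩ := exists_orthogonal_eq_mul_diagonal_eigDesc hY
  have hX := isHermitian_mul_diagonal_mul_transpose V d
  refine ⟨_, hX, eigDesc_mul_diagonal_mul_transpose hV hd hX, ?_⟩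
  conv_lhs => rw [hY_eq]
  rw [trace_mul_diagonal_mul_transpose_mul, transpose_mul_conj_mul_cancel hV, diag_diagonal]

theorem EConvexOn.apply_diag_le_apply_eigDesc (hg : EConvexOn g)
    (hg_perm : ∀ σ : Equiv.Perm (Fin n), ∀ v, g (v ∘ σ) = g v) {A R : Matrix (Fin n) (Fin n) ℝ}
    (hA : A.IsHermitian) (hR : Rᵀ * R = 1) : g (Rᵀ * A * R).diag ≤ g (eigDesc hA) := by
  obtain ⟨B, hB, hdiag⟩ := hA.exists_doublyStochastic_diag_eq hR
  rw [hdiag]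
  exact hg.apply_mulVec_le hg_perm hB _

theorem econvexOn_specFn (hg : EConvexOn g)
    (hg_perm : ∀ σ : Equiv.Perm (Fin n), ∀ v, g (v ∘ σ) = g v) : EConvexOn (specFn g) := by
  rintro ⟨X, s⟩ hXs ⟨Z, t⟩ hZt α β hα hβ hαβ
  have hX := isHermitian_of_specFn_le hXs
  have hZ := isHermitian_of_specFn_le hZt
  have hM : (α • X + β • Z).IsHermitian := (hX.smul (.all α)).add (hZ.smul (.all β))
  obtain ⟨R, hR, hM_eq⟩ := exists_orthogonal_eq_mul_diagonal_eigDesc hM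
  have hsplit : eigDesc hM = α • (Rᵀ * X * R).diag + β • (Rᵀ * Z * R).diag := by
    calc eigDesc hM = (Rᵀ * (α • X + β • Z) * R).diag := by
          conv_rhs => rw [hM_eq, transpose_mul_conj_mul_cancel hR, diag_diagonal]
      _ = α • (Rᵀ * X * R).diag + β • (Rᵀ * Z * R).diag := by
          simp only [Matrix.mul_add, Matrix.add_mul, Matrix.mul_smul, Matrix.smul_mul, diag_add,
            diag_smul]
  change specFn g (α • X + β • Z) ≤ ((α * s + β * t : ℝ) : EReal)
  rw [specFn_of_isHermitian hM, hsplit]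
  refine hg.apply_add_le ?_ ?_ hα hβ hαβ
  · exact (hg.apply_diag_le_apply_eigDesc hg_perm hX hR).trans
      ((specFn_of_isHermitian hX).symm.trans_le hXs)
  · exact (hg.apply_diag_le_apply_eigDesc hg_perm hZ hR).trans
      ((specFn_of_isHermitian hZ).symm.trans_le hZt)

theorem iSup_trace_mul_sub_specFn
    (hg_perm : ∀ σ : Equiv.Perm (Fin n), ∀ v, g (v ∘ σ) = g v)
    {Y : Matrix (Fin n) (Fin n) ℝ} (hY : Y.IsHermitian) :
    ⨆ X : Matrix (Fin n) (Fin n) ℝ, ((trace (Y * X) : ℝ) : EReal) - specFn g X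
      = ⨆ x : Fin n → ℝ, ((eigDesc hY ⬝ᵥ x : ℝ) : EReal) - g x := by
  refine le_antisymm (iSup_le fun X => ?_) (iSup_le fun x => ?_)
  · by_cases hX : X.IsHermitian
    · rw [specFn_of_isHermitian hX]
      refine le_iSup_of_le (eigDesc hX) (EReal.sub_le_sub ?_ le_rfl)
      exact EReal.coe_le_coe_iff.2 (trace_mul_le_dotProduct_eigDesc hY hX)
    · rw [specFn_of_not_isHermitian hX, EReal.sub_top]
      exact bot_le
  · obtain ⟨σ, hσ⟩ := exists_perm_antitone_comp x
    obtain ⟨X, hX, hX_eig, hX_trace⟩ := exists_eigDesc_eq_and_trace_mul_eq hY hσ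
    refine le_iSup_of_le X ?_
    rw [specFn_of_isHermitian hX, hX_eig, hg_perm, hX_trace]
    refine EReal.sub_le_sub (EReal.coe_le_coe_iff.2 ?_) le_rfl
    simpa [dotProduct] using
      ((antitone_eigDesc hY).monovary hσ).sum_mul_comp_perm_le_sum_mul (σ := σ.symm)

end SpectralFunction

theorem spectral_function_convex_and_conjugate_general
    {n : ℕ} (g : (Fin n → ℝ) → EReal)
    (hg_conv : EConvexOn g)
    (hg_perm : ∀ σ : Equiv.Perm (Fin n), ∀ v : Fin n → ℝ, g (v ∘ σ) = g v) :
    Convex ℝ {p : Matrix (Fin n) (Fin n) ℝ × ℝ | specFn g p.1 ≤ (p.2 : EReal)} ∧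
    ∀ (Y : Matrix (Fin n) (Fin n) ℝ) (hY : Y.IsHermitian),
      (⨆ X : Matrix (Fin n) (Fin n) ℝ, ((Matrix.trace (Y * X) : ℝ) : EReal) - specFn g X)
        = ⨆ x : Fin n → ℝ, ((∑ i, eigDesc hY i * x i : ℝ) : EReal) - g x :=
  ⟨econvexOn_specFn hg_conv hg_perm, fun _ hY => iSup_trace_mul_sub_specFn hg_perm hY⟩

/-- For a proper, convex, permutation-invariant `g : ℝⁿ → ℝ ∪ {+∞}`, the
spectral function `g ∘ λ` is convex on `Sⁿ` (with the trace inner product) and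
`(g ∘ λ)* = g* ∘ λ`. -/
theorem spectral_function_convex_and_conjugate
    {n : ℕ} (g : (Fin n → ℝ) → EReal)
    (hg_proper : EProper g) (hg_conv : EConvexOn g)
    (hg_perm : ∀ σ : Equiv.Perm (Fin n), ∀ v : Fin n → ℝ, g (v ∘ σ) = g v) :
    Convex ℝ {p : Matrix (Fin n) (Fin n) ℝ × ℝ | specFn g p.1 ≤ (p.2 : EReal)} ∧
    ∀ (Y : Matrix (Fin n) (Fin n) ℝ) (hY : Y.IsHermitian),
      (⨆ X : Matrix (Fin n) (Fin n) ℝ, ((Matrix.trace (Y * X) : ℝ) : EReal) - specFn g X)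
        = ⨆ x : Fin n → ℝ, ((∑ i, eigDesc hY i * x i : ℝ) : EReal) - g x :=
  spectral_function_convex_and_conjugate_general g hg_conv hg_perm
end
end
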